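/- arXiv:2406.07252 — 2 statements merged into one kernel-verified Lean document; each statement's English description precedes it below -/
import Mathlib

section
/- For a Φ-expander multigraph G with m edges, the electrical flow routing A = Bᵀ L⁺ satisfies max over edges e of ‖Bᵀ L⁺ χ_e‖₁ ≤ 3 ln(2m)/Φ, where χ_e is the unit demand on the endpoints of e. -/
noncomputable section
open Matrix ENNReal

variable {V E : Type*} [Fintype V] [Fintype E] [DecidableEq V]

/-- The edge-vertex incidence matrix of a multigraph whose edge `e` is oriented
from `tail e` to `head e`. -/
def incMatrix (tail head : E → V) : Matrix V E ℝ :=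
  fun v e => if v = tail e then 1 else if v = head e then -1 else 0

/-- `Lp` satisfies the four Penrose conditions for `L`. -/
def IsMoorePenrose {V : Type*} [Fintype V] (L Lp : Matrix V V ℝ) : Prop :=
  L * Lp * L = L ∧ Lp * L * Lp = Lp ∧ (L * Lp)ᵀ = L * Lp ∧ (Lp * L)ᵀ = Lp * L

/-- Connectivity, expressed through the Laplacian: the kernel of `L` consists
exactly of the constant vectors. -/
def IsConnectedLap {V : Type*} [Fintype V] (L : Matrix V V ℝ) : Prop :=
  ∀ x : V → ℝ, L.mulVec x = 0 → ∃ c : ℝ, ∀ v, x v = c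

/-- The volume of a vertex set: the sum of the degrees of its vertices. -/
def gvol (tail head : E → V) (S : Finset V) : ℕ :=
  ∑ e : E, ((if tail e ∈ S then 1 else 0) + (if head e ∈ S then 1 else 0))

/-- The number of edges with exactly one endpoint in `S`. -/
def bdry (tail head : E → V) (S : Finset V) : ℕ :=
  (Finset.univ.filter fun e : E =>
    (tail e ∈ S ∧ head e ∉ S) ∨ (tail e ∉ S ∧ head e ∈ S)).card

/-- The multigraph is a `Φ`-expander: `|∂S| ≥ Φ·vol(S)` whenever
`vol(S) ≤ vol(V)/2`. -/
def IsExpander (tail head : E → V) (Φ : ℝ) : Prop :=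
  ∀ S : Finset V, (gvol tail head S : ℝ) ≤ (gvol tail head Finset.univ : ℝ) / 2 →
    (bdry tail head S : ℝ) ≥ Φ * gvol tail head S

/-- The ℓp norm of a finite real vector, for `p ∈ [1,∞]`. -/
def lpNormE {n : Type*} [Fintype n] (p : ℝ≥0∞) (x : n → ℝ) : ℝ :=
  if p = ⊤ then ⨆ i, |x i| else (∑ i, |x i| ^ p.toReal) ^ (1 / p.toReal)

/-- Operator norm of a matrix from ℓp to ℓp, for `p ∈ [1,∞]`. -/
def opNormE {m n : Type*} [Fintype m] [Fintype n] (p : ℝ≥0∞) (X : Matrix m n ℝ) : ℝ :=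
  sSup {c | ∃ x : n → ℝ, x ≠ 0 ∧ c = lpNormE p (X.mulVec x) / lpNormE p x}

/-!
Let `ψ = L⁺ χ_e` be the electrical potential. Since `χ_e` is a column of `B` and `L = B Bᵀ`, any
generalized inverse of `L` already gives `L ψ = χ_e`, and the flow on an edge `g` is
`ψ (tail g) - ψ (head g)`, of length `ℓ g`.

For every level `t`, the superlevel set `S_t = {ψ > t}` receives net demand at most `1` and every
edge of the cut `C_t` leaves it, so `∑_{g ∈ C_t} ℓ g ≤ 1`. For `g ∈ C_t`, the volumes above the
upper and below the lower endpoint of `g` are at most `vol S_t` and `vol S_tᶜ`; let `r g` be the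
smaller one. Cauchy–Schwarz and expansion give
`Φ |C_t| ≤ |C_t|² / min (vol S_t) (vol S_tᶜ) ≤ ∑_{g ∈ C_t} 1 / (ℓ g * r g)`.
Integrating over `t` turns this into `Φ ∑ ℓ g ≤ ∑ 1 / r g`. Finally the volume above the upper
endpoint of `g` dominates the rank of `g` when the edges are sorted by upper endpoint (and likewise
below), so `∑ 1 / r g ≤ 2 H_m ≤ 3 log (2m)`.
-/

open Finset MeasureTheory

theorem Matrix.mul_transpose_mul_mul_eq_self {n k : Type*} [Fintype n] [DecidableEq n] [Fintype k]
    (B : Matrix n k ℝ) {G : Matrix n n ℝ} (hG : B * Bᵀ * G * (B * Bᵀ) = B * Bᵀ) :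
    B * Bᵀ * G * B = B := by
  -- `P = 1 - B Bᵀ G` annihilates `B Bᵀ`, hence `(P B) (P B)ᵀ = 0` and so `P B = 0`
  have hPL : (1 - B * Bᵀ * G) * (B * Bᵀ) = 0 := by rw [sub_mul, Matrix.one_mul, hG, sub_self]
  have hPB : (1 - B * Bᵀ * G) * B * ((1 - B * Bᵀ * G) * B)ᴴ = 0 := by
    rw [conjTranspose_eq_transpose_of_trivial, transpose_mul, Matrix.mul_assoc,
      ← Matrix.mul_assoc B, ← Matrix.mul_assoc, hPL, Matrix.zero_mul]
  have := self_mul_conjTranspose_eq_zero.1 hPB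
  rwa [Matrix.sub_mul, Matrix.one_mul, sub_eq_zero, eq_comm] at this

theorem mem_Ico_min_max_iff {a b t : ℝ} :
    t ∈ Set.Ico (min a b) (max a b) ↔ t < a ∧ ¬t < b ∨ ¬t < a ∧ t < b := by
  rw [Set.mem_Ico, min_le_iff, lt_max_iff]
  grind

theorem ite_sub_ite_mul_sub (a b t : ℝ) :
    ((if t < a then 1 else 0) - (if t < b then 1 else 0)) * (a - b) =
      if t < a ∧ ¬t < b ∨ ¬t < a ∧ t < b then |a - b| else 0 := by
  split_ifs <;> grind [abs_of_pos, abs_of_neg]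

theorem mul_sum_measureReal_le_sum_mul {X ι : Type*} [MeasurableSpace X] {μ : Measure X}
    {s : Finset ι} {S : ι → Set X} (hS : ∀ i ∈ s, MeasurableSet (S i))
    (hμS : ∀ i ∈ s, μ (S i) ≠ ⊤) {c : ℝ} {w : ι → ℝ}
    (h : ∀ x, ∑ i ∈ s, (S i).indicator (fun _ => c) x ≤
      ∑ i ∈ s, (S i).indicator (fun _ => w i) x) :
    c * ∑ i ∈ s, μ.real (S i) ≤ ∑ i ∈ s, w i * μ.real (S i) := by
  have hint : ∀ a : ι → ℝ, ∀ i ∈ s, Integrable ((S i).indicator fun _ => a i) μ :=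
    fun a i hi => (integrableOn_const (hμS i hi)).integrable_indicator (hS i hi)
  have := integral_mono (integrable_finsetSum s (hint fun _ => c))
    (integrable_finsetSum s (hint w)) h
  have hval : ∀ a : ι → ℝ,
      ∫ x, ∑ i ∈ s, (S i).indicator (fun _ => a i) x ∂μ = ∑ i ∈ s, a i * μ.real (S i) := by
    intro a
    rw [integral_finsetSum s (hint a)]
    refine sum_congr rfl fun i hi => ?_
    rw [integral_indicator_const _ (hS i hi), smul_eq_mul, mul_comm]
  rw [hval, hval] at this
  rwa [mul_sum]

theorem sum_inv_card_filter_le_le_harmonic {ι α : Type*} [LinearOrder α] (a : ι → α)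
    (s : Finset ι) : ∑ x ∈ s, ((#{y ∈ s | a y ≤ a x} : ℕ) : ℝ)⁻¹ ≤ harmonic #s := by
  classical
  induction s using Finset.induction_on_max_value a with
  | empty => simp
  | insert x₀ s hx₀ hmax ih =>
    have htop : #{y ∈ insert x₀ s | a y ≤ a x₀} = #s + 1 := by
      rw [filter_true_of_mem fun y hy => ?_, card_insert_of_notMem hx₀]
      rcases mem_insert.1 hy with rfl | hy
      exacts [le_rfl, hmax y hy]
    have hrest : ∀ x ∈ s, ((#{y ∈ insert x₀ s | a y ≤ a x} : ℕ) : ℝ)⁻¹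
        ≤ ((#{y ∈ s | a y ≤ a x} : ℕ) : ℝ)⁻¹ := fun x hx =>
      inv_anti₀ (by exact_mod_cast card_pos.2 ⟨x, mem_filter.2 ⟨hx, le_refl (a x)⟩⟩)
        (by exact_mod_cast card_le_card (filter_subset_filter _ (subset_insert _ _)))
    rw [sum_insert hx₀, htop, card_insert_of_notMem hx₀, harmonic_succ]
    push_cast
    linarith [sum_le_sum hrest]

theorem mul_card_le_sum_inv_mul {ι : Type*} (s : Finset ι) {ℓ r : ι → ℝ} {M c : ℝ}
    (hℓ : ∀ i ∈ s, 0 < ℓ i) (hℓs : ∑ i ∈ s, ℓ i ≤ 1) (hr : ∀ i ∈ s, 0 < r i)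
    (hrM : ∀ i ∈ s, r i ≤ M) (hM : c * M ≤ #s) : c * #s ≤ ∑ i ∈ s, (ℓ i * r i)⁻¹ := by
  rcases s.eq_empty_or_nonempty with rfl | ⟨i₀, hi₀⟩
  · simp
  have hM₀ : 0 < M := (hr i₀ hi₀).trans_le (hrM i₀ hi₀)
  have hCS : (#s : ℝ) ^ 2 ≤ ∑ i ∈ s, (ℓ i)⁻¹ := by
    have hℓs₀ : 0 < ∑ i ∈ s, ℓ i := sum_pos hℓ ⟨i₀, hi₀⟩
    have := sq_sum_div_le_sum_sq_div s (fun _ => (1 : ℝ)) hℓ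
    simp only [sum_const, nsmul_eq_mul, mul_one, one_pow, one_div] at this
    exact (le_div_self (by positivity) hℓs₀ hℓs).trans this
  have hinv : ∑ i ∈ s, (ℓ i)⁻¹ ≤ M * ∑ i ∈ s, (ℓ i * r i)⁻¹ := by
    rw [mul_sum]
    refine sum_le_sum fun i hi => ?_
    rw [mul_inv, mul_comm (ℓ i)⁻¹, ← mul_assoc]
    exact le_mul_of_one_le_left (inv_pos.2 (hℓ i hi)).le
      (by rw [mul_comm]; exact (one_le_inv_mul₀ (hr i hi)).2 (hrM i hi))
  refine le_of_mul_le_mul_left ?_ hM₀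
  calc M * (c * #s) = c * M * #s := by ring
    _ ≤ #s ^ 2 := by rw [sq]; exact mul_le_mul_of_nonneg_right hM (Nat.cast_nonneg _)
    _ ≤ M * ∑ i ∈ s, (ℓ i * r i)⁻¹ := hCS.trans hinv

theorem inv_min_le_inv_add_inv {a b : ℝ} (ha : 0 ≤ a) (hb : 0 ≤ b) :
    (min a b)⁻¹ ≤ a⁻¹ + b⁻¹ := by
  rcases min_choice a b with h | h <;> rw [h]
  · exact le_add_of_nonneg_right (inv_nonneg.2 hb)
  · exact le_add_of_nonneg_left (inv_nonneg.2 ha)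

def superlevel {α : Type*} [Fintype α] (ψ : α → ℝ) (t : ℝ) : Finset α := {v | t < ψ v}

@[simp]
theorem mem_superlevel {α : Type*} [Fintype α] {ψ : α → ℝ} {t : ℝ} {v : α} :
    v ∈ superlevel ψ t ↔ t < ψ v := by
  simp [superlevel]

section Graph

variable {V E : Type*} [Fintype E] [DecidableEq V] (tail head : E → V)

def cutEdges (S : Finset V) : Finset E :=
  {g | tail g ∈ S ∧ head g ∉ S ∨ tail g ∉ S ∧ head g ∈ S}

theorem card_cutEdges (S : Finset V) : #(cutEdges tail head S) = bdry tail head S := rfl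

theorem gvol_mono {S T : Finset V} (h : S ⊆ T) : gvol tail head S ≤ gvol tail head T := by
  unfold gvol
  gcongr with g <;> split_ifs <;> grind

theorem gvol_add_gvol_compl [Fintype V] (S : Finset V) :
    gvol tail head S + gvol tail head Sᶜ = gvol tail head univ := by
  simp only [gvol, ← sum_add_distrib]
  refine sum_congr rfl fun g _ => ?_
  by_cases h₁ : tail g ∈ S <;> by_cases h₂ : head g ∈ S <;> simp [h₁, h₂]

theorem bdry_compl [Fintype V] (S : Finset V) : bdry tail head Sᶜ = bdry tail head S := by
  simp only [bdry, mem_compl, not_not]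
  congr 1
  exact filter_congr fun g _ => by tauto

theorem card_filter_incident_le_gvol (S : Finset V) :
    #{g | tail g ∈ S ∨ head g ∈ S} ≤ gvol tail head S := by
  rw [card_filter]
  exact sum_le_sum fun g _ => by split_ifs <;> simp_all

variable {tail head} in
theorem IsExpander.mul_min_gvol_le_bdry [Fintype V] {Φ : ℝ} (hexp : IsExpander tail head Φ)
    (hΦ : 0 ≤ Φ) (S : Finset V) :
    Φ * min (gvol tail head S : ℝ) (gvol tail head Sᶜ) ≤ bdry tail head S := by
  have hsum : (gvol tail head S : ℝ) + gvol tail head Sᶜ = gvol tail head univ := by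
    exact_mod_cast gvol_add_gvol_compl tail head S
  by_cases hS : (gvol tail head S : ℝ) ≤ gvol tail head univ / 2
  · exact (mul_le_mul_of_nonneg_left (min_le_left _ _) hΦ).trans (hexp S hS)
  · rw [← bdry_compl]
    exact (mul_le_mul_of_nonneg_left (min_le_right _ _) hΦ).trans (hexp Sᶜ (by linarith))

variable [Fintype V] (ψ : V → ℝ)

def upperVol (g : E) : ℕ := gvol tail head {v | max (ψ (tail g)) (ψ (head g)) ≤ ψ v}

def lowerVol (g : E) : ℕ := gvol tail head {v | ψ v ≤ min (ψ (tail g)) (ψ (head g))}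

variable {tail head ψ}

theorem mem_cutEdges_superlevel {t : ℝ} {g : E} :
    g ∈ cutEdges tail head (superlevel ψ t) ↔
      t ∈ Set.Ico (min (ψ (tail g)) (ψ (head g))) (max (ψ (tail g)) (ψ (head g))) := by
  rw [mem_Ico_min_max_iff]
  simp [cutEdges]

theorem upperVol_le_gvol_superlevel {t : ℝ} {g : E}
    (hg : g ∈ cutEdges tail head (superlevel ψ t)) :
    upperVol tail head ψ g ≤ gvol tail head (superlevel ψ t) := by
  refine gvol_mono tail head fun v hv => ?_
  simp only [mem_filter, mem_univ, true_and, mem_superlevel] at hv ⊢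
  exact (mem_cutEdges_superlevel.1 hg).2.trans_le hv

theorem lowerVol_le_gvol_compl_superlevel {t : ℝ} {g : E}
    (hg : g ∈ cutEdges tail head (superlevel ψ t)) :
    lowerVol tail head ψ g ≤ gvol tail head (superlevel ψ t)ᶜ := by
  refine gvol_mono tail head fun v hv => ?_
  simp only [mem_filter, mem_univ, true_and, mem_compl, mem_superlevel, not_lt] at hv ⊢
  exact hv.trans (mem_cutEdges_superlevel.1 hg).1

theorem card_le_upperVol (g : E) :
    #{g' | max (ψ (tail g)) (ψ (head g)) ≤ max (ψ (tail g')) (ψ (head g'))} ≤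
      upperVol tail head ψ g := by
  refine (card_le_card fun g' hg' => ?_).trans (card_filter_incident_le_gvol tail head _)
  simp only [mem_filter, mem_univ, true_and] at hg' ⊢
  exact le_max_iff.1 hg'

theorem card_le_lowerVol (g : E) :
    #{g' | min (ψ (tail g')) (ψ (head g')) ≤ min (ψ (tail g)) (ψ (head g))} ≤
      lowerVol tail head ψ g := by
  refine (card_le_card fun g' hg' => ?_).trans (card_filter_incident_le_gvol tail head _)
  simp only [mem_filter, mem_univ, true_and] at hg' ⊢
  exact min_le_iff.1 hg'

theorem upperVol_pos (g : E) : 0 < upperVol tail head ψ g :=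
  (card_pos.2 ⟨g, by simp [le_total]⟩).trans_le (card_le_upperVol g)

theorem lowerVol_pos (g : E) : 0 < lowerVol tail head ψ g :=
  (card_pos.2 ⟨g, by simp⟩).trans_le (card_le_lowerVol g)

theorem sum_inv_upperVol_le_harmonic :
    ∑ g, (upperVol tail head ψ g : ℝ)⁻¹ ≤ harmonic (Fintype.card E) :=
  (sum_le_sum fun g _ => inv_anti₀ (by exact_mod_cast (card_pos.2 ⟨g, by simp [le_total]⟩))
    (Nat.cast_le.2 (card_le_upperVol g))).trans <|
      sum_inv_card_filter_le_le_harmonic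
        (fun g => OrderDual.toDual (max (ψ (tail g)) (ψ (head g)))) univ

theorem sum_inv_lowerVol_le_harmonic :
    ∑ g, (lowerVol tail head ψ g : ℝ)⁻¹ ≤ harmonic (Fintype.card E) :=
  (sum_le_sum fun g _ => inv_anti₀ (by exact_mod_cast (card_pos.2 ⟨g, by simp⟩))
    (Nat.cast_le.2 (card_le_lowerVol g))).trans <|
      sum_inv_card_filter_le_le_harmonic (fun g => min (ψ (tail g)) (ψ (head g))) univ

theorem sum_indicator_eq_sum_cutEdges (w : E → ℝ) (t : ℝ) :
    ∑ g, (Set.Ico (min (ψ (tail g)) (ψ (head g))) (max (ψ (tail g)) (ψ (head g)))).indicator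
      (fun _ => w g) t = ∑ g ∈ cutEdges tail head (superlevel ψ t), w g := by
  classical
  simp only [Set.indicator_apply, ← mem_cutEdges_superlevel, ← sum_filter, filter_mem_eq_inter,
    univ_inter]

theorem IsExpander.mul_card_cutEdges_le {Φ : ℝ} (hexp : IsExpander tail head Φ) (hΦ : 0 ≤ Φ)
    {t : ℝ} (hcut : ∑ g ∈ cutEdges tail head (superlevel ψ t), |ψ (tail g) - ψ (head g)| ≤ 1) :
    Φ * #(cutEdges tail head (superlevel ψ t)) ≤
      ∑ g ∈ cutEdges tail head (superlevel ψ t), (|ψ (tail g) - ψ (head g)| *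
        min (upperVol tail head ψ g : ℝ) (lowerVol tail head ψ g))⁻¹ :=
  mul_card_le_sum_inv_mul _
    (fun g hg => abs_sub_pos.2 fun h => by simpa [h] using mem_cutEdges_superlevel.1 hg) hcut
    (fun g _ => lt_min (by exact_mod_cast upperVol_pos g) (by exact_mod_cast lowerVol_pos g))
    (fun g hg => min_le_min (Nat.cast_le.2 (upperVol_le_gvol_superlevel hg))
      (Nat.cast_le.2 (lowerVol_le_gvol_compl_superlevel hg)))
    (card_cutEdges tail head _ ▸ hexp.mul_min_gvol_le_bdry hΦ _)

theorem IsExpander.mul_sum_abs_sub_le {Φ : ℝ} (hexp : IsExpander tail head Φ) (hΦ : 0 ≤ Φ)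
    (hcut : ∀ t, ∑ g ∈ cutEdges tail head (superlevel ψ t), |ψ (tail g) - ψ (head g)| ≤ 1) :
    Φ * ∑ g, |ψ (tail g) - ψ (head g)| ≤ 2 * harmonic (Fintype.card E) := by
  set ℓ : E → ℝ := fun g => |ψ (tail g) - ψ (head g)|
  set r : E → ℝ := fun g => min (upperVol tail head ψ g : ℝ) (lowerVol tail head ψ g)
  have hlayer := mul_sum_measureReal_le_sum_mul (μ := volume) (s := univ)
    (S := fun g => Set.Ico (min (ψ (tail g)) (ψ (head g))) (max (ψ (tail g)) (ψ (head g))))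
    (fun _ _ => measurableSet_Ico) (fun _ _ => measure_Ico_lt_top.ne)
    (w := fun g => (ℓ g * r g)⁻¹) fun t => by
      rw [sum_indicator_eq_sum_cutEdges, sum_indicator_eq_sum_cutEdges, sum_const, nsmul_eq_mul,
        mul_comm]
      exact hexp.mul_card_cutEdges_le hΦ (hcut t)
  simp only [Real.volume_real_Ico_of_le min_le_max, max_sub_min_eq_abs'] at hlayer
  calc Φ * ∑ g, ℓ g ≤ ∑ g, (ℓ g * r g)⁻¹ * ℓ g := hlayer
    _ ≤ ∑ g, (r g)⁻¹ := sum_le_sum fun g _ => by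
      rcases eq_or_ne (ℓ g) 0 with h | h
      · simp only [h, mul_zero]
        positivity
      · rw [mul_inv, mul_right_comm, inv_mul_cancel₀ h, one_mul]
    _ ≤ ∑ g, ((upperVol tail head ψ g : ℝ)⁻¹ + (lowerVol tail head ψ g : ℝ)⁻¹) :=
      sum_le_sum fun g _ => inv_min_le_inv_add_inv (Nat.cast_nonneg _) (Nat.cast_nonneg _)
    _ ≤ 2 * harmonic (Fintype.card E) := by
      rw [sum_add_distrib, two_mul]
      exact add_le_add sum_inv_upperVol_le_harmonic sum_inv_lowerVol_le_harmonic

end Graph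

section Incidence

variable {V E : Type*} [DecidableEq V] {tail head : E → V}

theorem incMatrix_apply_of_ne {g : E} (hg : tail g ≠ head g) (v : V) :
    incMatrix tail head v g = (if v = tail g then 1 else 0) - (if v = head g then 1 else 0) := by
  unfold incMatrix
  split_ifs <;> simp_all

theorem sum_incMatrix_apply {g : E} (hg : tail g ≠ head g) (S : Finset V) :
    ∑ v ∈ S, incMatrix tail head v g =
      (if tail g ∈ S then 1 else 0) - (if head g ∈ S then 1 else 0) := by
  simp only [incMatrix_apply_of_ne hg, sum_sub_distrib, sum_ite_eq']

theorem incMatrix_transpose_mulVec [Fintype V] [Fintype E] (hloop : ∀ g, tail g ≠ head g)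
    (ψ : V → ℝ) : (incMatrix tail head)ᵀ *ᵥ ψ = fun g => ψ (tail g) - ψ (head g) := by
  ext g
  simp [mulVec, dotProduct, incMatrix_apply_of_ne (hloop g), sub_mul, sum_sub_distrib]

theorem sum_superlevel_incMatrix_mulVec [Fintype V] [Fintype E]
    (hloop : ∀ g, tail g ≠ head g) (ψ : V → ℝ) (t : ℝ) :
    ∑ v ∈ superlevel ψ t, (incMatrix tail head *ᵥ ((incMatrix tail head)ᵀ *ᵥ ψ)) v =
      ∑ g ∈ cutEdges tail head (superlevel ψ t), |ψ (tail g) - ψ (head g)| := by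
  rw [incMatrix_transpose_mulVec hloop]
  simp only [mulVec, dotProduct]
  rw [sum_comm]
  simp only [← sum_mul, sum_incMatrix_apply (hloop _), mem_superlevel, ite_sub_ite_mul_sub]
  rw [← sum_filter]
  congr 1
  ext g
  simp [cutEdges]

end Incidence

theorem electrical_routing_l1_bound_general (tail head : E → V) (hloop : ∀ e, tail e ≠ head e)
    (B : Matrix V E ℝ) (hB : B = incMatrix tail head)
    (L : Matrix V V ℝ) (hL : L = B * Bᵀ)
    (Lp : Matrix V V ℝ) (hLp : IsMoorePenrose L Lp)
    (m : ℕ) (hm : m = Fintype.card E)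
    (Φ : ℝ) (hΦ : 0 < Φ) (hexp : IsExpander tail head Φ)
    (e : E) :
    ∑ f, |(Bᵀ * Lp).mulVec
        (fun v => if v = tail e then 1 else if v = head e then -1 else 0) f|
      ≤ 3 * Real.log (2 * m) / Φ := by
  classical
  subst hB hL hm
  -- the demand vector `χ_e` is, definitionally, the column of `incMatrix` at `e`
  set ψ := Lp *ᵥ (incMatrix tail head).col e
  have hLψ :
      (incMatrix tail head * (incMatrix tail head)ᵀ) *ᵥ ψ = (incMatrix tail head).col e := by
    rw [mulVec_mulVec, ← mulVec_single_one, mulVec_mulVec,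
      mul_transpose_mul_mul_eq_self _ hLp.1]
  have hcut (t : ℝ) :
      ∑ g ∈ cutEdges tail head (superlevel ψ t), |ψ (tail g) - ψ (head g)| ≤ 1 := by
    rw [← sum_superlevel_incMatrix_mulVec hloop, mulVec_mulVec, hLψ]
    simp only [col_apply, sum_incMatrix_apply (hloop e)]
    split_ifs <;> norm_num
  have hE : 1 ≤ Fintype.card E := Fintype.card_pos_iff.2 ⟨e⟩
  rw [← mulVec_mulVec]
  change ∑ g, |((incMatrix tail head)ᵀ *ᵥ ψ) g| ≤ _
  rw [incMatrix_transpose_mulVec hloop, le_div_iff₀ hΦ, mul_comm]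
  calc Φ * ∑ g, |ψ (tail g) - ψ (head g)| ≤ 2 * harmonic (Fintype.card E) :=
        hexp.mul_sum_abs_sub_le hΦ.le hcut
    _ ≤ 2 * (1 + Real.log (Fintype.card E)) := by gcongr; exact harmonic_le_one_add_log _
    _ ≤ 3 * Real.log (2 * Fintype.card E) := by
      rw [Real.log_mul two_ne_zero (by positivity)]
      linarith [Real.log_two_gt_d9, Real.log_nonneg (Nat.one_le_cast.2 hE)]

/-- Main theorem: on a `Φ`-expander multigraph with `m` edges, the electrical
routing `A = Bᵀ L⁺` satisfies `‖Bᵀ L⁺ χ_e‖₁ ≤ 3 ln(2m)/Φ` for every edge `e`,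
where `χ_e = 1_{tail e} - 1_{head e}`. -/
theorem electrical_routing_l1_bound (tail head : E → V) (hloop : ∀ e, tail e ≠ head e)
    (B : Matrix V E ℝ) (hB : B = incMatrix tail head)
    (L : Matrix V V ℝ) (hL : L = B * Bᵀ)
    (hconn : IsConnectedLap L)
    (Lp : Matrix V V ℝ) (hLp : IsMoorePenrose L Lp)
    (m : ℕ) (hm : m = Fintype.card E) (hm1 : 1 ≤ m)
    (Φ : ℝ) (hΦ : 0 < Φ) (hexp : IsExpander tail head Φ)
    (e : E) :
    ∑ f, |(Bᵀ * Lp).mulVec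
        (fun v => if v = tail e then 1 else if v = head e then -1 else 0) f|
      ≤ 3 * Real.log (2 * m) / Φ :=
  electrical_routing_l1_bound_general tail head hloop B hB L hL Lp hLp m hm Φ hΦ hexp e
end
end

section
/- For any p ∈ [1,∞] and q given by 1/p + 1/q = 1, the ℓp and ℓq multi-commodity competitive ratios of the electrical flow routing on an unweighted multigraph are equal: ρ_p(A_ℰ) = ρ_q(A_ℰ). -/
noncomputable section
open Matrix ENNReal

variable {V E : Type*} [Fintype V] [Fintype E] [DecidableEq V]

/-- The congestion (in the ℓp sense) incurred by the multiset of flows `f`. -/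
def cong {E : Type*} [Fintype E] (p : ℝ≥0∞) {k : ℕ} (f : Fin k → E → ℝ) : ℝ :=
  lpNormE p (fun e => ∑ i, |f i e|)

/-- The optimal ℓp congestion for routing the multiset of demands `χ`. -/
def opt {V E : Type*} [Fintype V] [Fintype E] (p : ℝ≥0∞) (B : Matrix V E ℝ)
    {k : ℕ} (χ : Fin k → V → ℝ) : ℝ :=
  sInf {c | ∃ f : Fin k → E → ℝ, (∀ i, B.mulVec (f i) = χ i) ∧ c = cong p f}

/-- The multi-commodity ℓp competitive ratio of the oblivious routing `A`. -/
def compRatio {V E : Type*} [Fintype V] [Fintype E] (p : ℝ≥0∞)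
    (B : Matrix V E ℝ) (A : Matrix E V ℝ) : ℝ :=
  sSup {r | ∃ (k : ℕ) (χ : Fin k → V → ℝ), (∀ i, ∑ v, χ i v = 0) ∧
    r = cong p (fun i => A.mulVec (χ i)) / opt p B χ}

/-! The competitive ratio of a linear routing `A` for `B` is the ℓp operator norm of `|A B|`.
Routing a demand `χ = B f` through `A` gives the flow `A χ = (A B) f`, whose congestion is at most
`‖|A B|‖` times that of `f`; conversely, a flow `x` split into one commodity per edge attains that
bound. For the electrical routing, `A B = Bᵀ L⁺ B` is symmetric, since the Moore–Penrose inverse of a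
symmetric matrix is symmetric, and by Hölder duality a matrix and its transpose have the same
operator norm on ℓp and ℓq respectively. -/

section LpNorm

variable {n : Type*} [Fintype n] {p q : ℝ≥0∞}

lemma lpNormE_eq_norm (hp : 1 ≤ p) (x : n → ℝ) : lpNormE p x = ‖WithLp.toLp p x‖ := by
  unfold lpNormE
  split_ifs with htop
  · subst htop
    simp [PiLp.norm_eq_ciSup]
  · rw [PiLp.norm_eq_sum (ENNReal.toReal_pos (zero_lt_one.trans_le hp).ne' htop)]
    simp

lemma lpNormE_nonneg (x : n → ℝ) : 0 ≤ lpNormE p x := by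
  unfold lpNormE
  split_ifs
  · exact Real.iSup_nonneg fun i => abs_nonneg _
  · positivity

lemma lpNormE_zero (hp : 1 ≤ p) : lpNormE p (0 : n → ℝ) = 0 := by
  have := Fact.mk hp
  rw [lpNormE_eq_norm hp, WithLp.toLp_zero, norm_zero]

lemma lpNormE_pos (hp : 1 ≤ p) {x : n → ℝ} (hx : x ≠ 0) : 0 < lpNormE p x := by
  have := Fact.mk hp
  rw [lpNormE_eq_norm hp, norm_pos_iff]
  simpa using hx

lemma lpNormE_abs (x : n → ℝ) : lpNormE p (fun i => |x i|) = lpNormE p x := by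
  simp [lpNormE]

lemma lpNormE_mono {x y : n → ℝ} (h : ∀ i, |x i| ≤ |y i|) : lpNormE p x ≤ lpNormE p y := by
  unfold lpNormE
  split_ifs
  · exact ciSup_mono (Set.finite_range _).bddAbove h
  · exact Real.rpow_le_rpow (by positivity)
      (Finset.sum_le_sum fun i _ => Real.rpow_le_rpow (abs_nonneg _) (h i) toReal_nonneg)
      (by positivity)

lemma lpNormE_le_of_abs_le {x y : n → ℝ} (h : ∀ i, |x i| ≤ y i) :
    lpNormE p x ≤ lpNormE p y :=
  lpNormE_mono fun i => (h i).trans (le_abs_self _)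

lemma lpNormE_top (x : n → ℝ) : lpNormE ⊤ x = ⨆ i, |x i| := if_pos rfl

lemma lpNormE_one (x : n → ℝ) : lpNormE 1 x = ∑ i, |x i| := by
  simp [lpNormE]

lemma abs_le_lpNormE_top (x : n → ℝ) (i : n) : |x i| ≤ lpNormE ⊤ x :=
  le_ciSup (f := fun j => |x j|) (Set.finite_range _).bddAbove i

lemma abs_sign_le_one (x : ℝ) : |(SignType.sign x : ℝ)| ≤ 1 := by
  rcases lt_trichotomy x 0 with hx | rfl | hx <;> simp [*]

lemma dotProduct_le_lpNormE_top_mul_lpNormE_one (x y : n → ℝ) :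
    x ⬝ᵥ y ≤ lpNormE ⊤ x * lpNormE 1 y := by
  rw [lpNormE_one, Finset.mul_sum]
  refine Finset.sum_le_sum fun i _ => ?_
  calc x i * y i ≤ |x i| * |y i| := by rw [← abs_mul]; exact le_abs_self _
    _ ≤ lpNormE ⊤ x * |y i| := by gcongr; exact abs_le_lpNormE_top x i

lemma dotProduct_le_lpNormE_mul [p.HolderConjugate q] (x y : n → ℝ) :
    x ⬝ᵥ y ≤ lpNormE p x * lpNormE q y := by
  by_cases hp : p = ⊤
  · obtain rfl : q = 1 := (HolderConjugate.eq_top_iff_eq_one p q).1 hp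
    exact hp ▸ dotProduct_le_lpNormE_top_mul_lpNormE_one x y
  by_cases hq : q = ⊤
  · obtain rfl : p = 1 := (HolderConjugate.eq_top_iff_eq_one q p).1 hq
    rw [dotProduct_comm, mul_comm]
    exact hq ▸ dotProduct_le_lpNormE_top_mul_lpNormE_one y x
  simpa [lpNormE, hp, hq, dotProduct] using
    Real.inner_le_Lp_mul_Lq Finset.univ x y (HolderConjugate.toReal_of_ne_top hp hq)

lemma exists_lpNormE_top_le_one_dotProduct_eq (v : n → ℝ) :
    ∃ z, lpNormE ⊤ z ≤ 1 ∧ v ⬝ᵥ z = lpNormE 1 v :=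
  ⟨fun i => SignType.sign (v i),
    by rw [lpNormE_top]; exact Real.iSup_le (fun i => abs_sign_le_one _) zero_le_one,
    by simp [dotProduct, lpNormE_one, self_mul_sign]⟩

lemma exists_lpNormE_one_le_one_dotProduct_eq (v : n → ℝ) :
    ∃ z, lpNormE 1 z ≤ 1 ∧ v ⬝ᵥ z = lpNormE ⊤ v := by
  classical
  rcases isEmpty_or_nonempty n with hn | hn
  · exact ⟨0, by simp [lpNormE_one], by simp [lpNormE_top]⟩
  obtain ⟨i₀, hi₀⟩ := Finite.exists_max fun i => |v i|
  refine ⟨Pi.single i₀ (SignType.sign (v i₀)), ?_, ?_⟩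
  · rw [lpNormE_one, Finset.sum_eq_single i₀ (fun i _ hi => by simp [hi]) (by simp)]
    simpa using abs_sign_le_one (v i₀)
  · rw [dotProduct_single, self_mul_sign, lpNormE_top]
    exact le_antisymm (le_ciSup (f := fun i => |v i|) (Set.finite_range _).bddAbove i₀)
      (ciSup_le hi₀)

lemma exists_lpNormE_le_one_dotProduct_eq_of_ne_top [p.HolderConjugate q] (hp : p ≠ ⊤)
    (hq : q ≠ ⊤) (v : n → ℝ) : ∃ z, lpNormE p z ≤ 1 ∧ v ⬝ᵥ z = lpNormE q v := by
  rcases eq_or_ne v 0 with rfl | hv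
  · exact ⟨0, by rw [lpNormE_zero (HolderConjugate.one_le p q)]; exact zero_le_one,
      by rw [zero_dotProduct, lpNormE_zero (HolderConjugate.one_le q p)]⟩
  have hconj : q.toReal.HolderConjugate p.toReal := HolderConjugate.toReal_of_ne_top hq hp
  set t := q.toReal
  set N := lpNormE q v
  have hN : 0 < N := lpNormE_pos (HolderConjugate.one_le q p) hv
  have hsum : ∑ i, (|v i| / N) ^ t = 1 := by
    have hNt : N ^ t = ∑ i, |v i| ^ t := by
      simp only [N, lpNormE, if_neg hq, one_div]
      exact Real.rpow_inv_rpow (by positivity) hconj.ne_zero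
    simp_rw [Real.div_rpow (abs_nonneg _) hN.le, ← Finset.sum_div, ← hNt]
    exact div_self (by positivity)
  -- the equality case of Hölder's inequality: `zᵢ ∝ sign vᵢ · |vᵢ|^(t-1)`
  refine ⟨fun i => SignType.sign (v i) * (|v i| / N) ^ (t - 1), le_of_eq ?_, ?_⟩
  · have habs : ∀ i, |SignType.sign (v i) * (|v i| / N) ^ (t - 1)| ^ p.toReal
        = (|v i| / N) ^ t := fun i => by
      rcases eq_or_ne (v i) 0 with h0 | h0
      · simp [h0, Real.zero_rpow hconj.ne_zero, Real.zero_rpow hconj.symm.ne_zero]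
      · have hsign : |(SignType.sign (v i) : ℝ)| = 1 := by
          rcases h0.lt_or_gt with h | h <;> simp [h]
        rw [abs_mul, hsign, one_mul, abs_of_nonneg (by positivity), ← Real.rpow_mul (by positivity),
          hconj.sub_one_mul_conj]
    simp only [lpNormE, if_neg hp, habs, hsum, Real.one_rpow]
  · have hterm : ∀ i, v i * (SignType.sign (v i) * (|v i| / N) ^ (t - 1)) = N * (|v i| / N) ^ t :=
      fun i => by
      rw [← mul_assoc, self_mul_sign, show t = 1 + (t - 1) by ring,
        Real.rpow_one_add' (by positivity) (by linarith [hconj.lt]), ← mul_assoc,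
        mul_div_cancel₀ _ hN.ne', add_sub_cancel_left]
    simp only [dotProduct, hterm, ← Finset.mul_sum, hsum, mul_one]

lemma exists_lpNormE_le_one_dotProduct_eq [p.HolderConjugate q] (v : n → ℝ) :
    ∃ z, lpNormE p z ≤ 1 ∧ v ⬝ᵥ z = lpNormE q v := by
  by_cases hp : p = ⊤
  · obtain rfl : q = 1 := (HolderConjugate.eq_top_iff_eq_one p q).1 hp
    exact hp ▸ exists_lpNormE_top_le_one_dotProduct_eq v
  by_cases hq : q = ⊤
  · obtain rfl : p = 1 := (HolderConjugate.eq_top_iff_eq_one q p).1 hq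
    exact hq ▸ exists_lpNormE_one_le_one_dotProduct_eq v
  exact exists_lpNormE_le_one_dotProduct_eq_of_ne_top hp hq v

end LpNorm

section OpNorm

variable {m n : Type*} [Fintype m] [Fintype n] {p q : ℝ≥0∞}

lemma opNormE_nonneg (X : Matrix m n ℝ) : 0 ≤ opNormE p X :=
  Real.sSup_nonneg <| by
    rintro c ⟨x, -, rfl⟩
    exact div_nonneg (lpNormE_nonneg _) (lpNormE_nonneg _)

lemma opNormE_eq_norm_toLpLin [DecidableEq n] [Fact (1 ≤ p)] (X : Matrix m n ℝ) :
    opNormE p X = ‖LinearMap.toContinuousLinearMap (Matrix.toLpLin p p X)‖ := by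
  have hp : 1 ≤ p := Fact.out
  set T := LinearMap.toContinuousLinearMap (Matrix.toLpLin p p X)
  have hT : ∀ x : n → ℝ, lpNormE p (X *ᵥ x) = ‖T (WithLp.toLp p x)‖ := fun x => by
    rw [lpNormE_eq_norm hp]; rfl
  have hle : ∀ c ∈ {c | ∃ x : n → ℝ, x ≠ 0 ∧ c = lpNormE p (X *ᵥ x) / lpNormE p x}, c ≤ ‖T‖ := by
    rintro c ⟨x, -, rfl⟩
    rw [hT, lpNormE_eq_norm hp]
    exact div_le_of_le_mul₀ (norm_nonneg _) (norm_nonneg _) (T.le_opNorm _)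
  refine le_antisymm (Real.sSup_le hle (norm_nonneg _)) ?_
  refine T.opNorm_le_bound (opNormE_nonneg X) fun x => ?_
  rcases eq_or_ne x 0 with rfl | hx
  · simp
  have hx' : WithLp.ofLp x ≠ 0 := by simpa using hx
  have hpos := lpNormE_pos hp hx'
  have := le_csSup ⟨_, hle⟩ ⟨WithLp.ofLp x, hx', rfl⟩
  rw [div_le_iff₀ hpos, hT, lpNormE_eq_norm hp] at this
  rwa [WithLp.toLp_ofLp] at this

lemma lpNormE_mulVec_le (hp : 1 ≤ p) (X : Matrix m n ℝ) (x : n → ℝ) :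
    lpNormE p (X *ᵥ x) ≤ opNormE p X * lpNormE p x := by
  classical
  have := Fact.mk hp
  rw [opNormE_eq_norm_toLpLin, lpNormE_eq_norm hp, lpNormE_eq_norm hp]
  exact (LinearMap.toContinuousLinearMap (Matrix.toLpLin p p X)).le_opNorm (WithLp.toLp p x)

lemma opNormE_le_of_forall {X : Matrix m n ℝ} {c : ℝ} (hc : 0 ≤ c)
    (h : ∀ x, lpNormE p (X *ᵥ x) ≤ c * lpNormE p x) : opNormE p X ≤ c :=
  Real.sSup_le (fun _ ⟨x, _, hx⟩ => hx ▸ div_le_of_le_mul₀ (lpNormE_nonneg x) hc (h x)) hc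

lemma opNormE_transpose_le [p.HolderConjugate q] (X : Matrix m n ℝ) :
    opNormE q Xᵀ ≤ opNormE p X := by
  refine opNormE_le_of_forall (opNormE_nonneg X) fun y => ?_
  obtain ⟨z, hz, hzy⟩ := exists_lpNormE_le_one_dotProduct_eq (p := p) (q := q) (Xᵀ *ᵥ y)
  calc lpNormE q (Xᵀ *ᵥ y) = (X *ᵥ z) ⬝ᵥ y := by
        rw [← hzy, mulVec_transpose, ← dotProduct_mulVec, dotProduct_comm]
    _ ≤ lpNormE p (X *ᵥ z) * lpNormE q y := dotProduct_le_lpNormE_mul _ _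
    _ ≤ opNormE p X * lpNormE q y := by
        refine mul_le_mul_of_nonneg_right ?_ (lpNormE_nonneg y)
        calc lpNormE p (X *ᵥ z) ≤ opNormE p X * lpNormE p z :=
              lpNormE_mulVec_le (HolderConjugate.one_le p q) X z
          _ ≤ opNormE p X := mul_le_of_le_one_right (opNormE_nonneg X) hz

lemma opNormE_transpose [p.HolderConjugate q] (X : Matrix m n ℝ) :
    opNormE p X = opNormE q Xᵀ :=
  le_antisymm (by simpa using opNormE_transpose_le (p := q) (q := p) Xᵀ)
    (opNormE_transpose_le X)

end OpNorm

section Routing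

variable {m n : Type*} [Fintype n] {p : ℝ≥0∞} {k : ℕ}

lemma abs_mulVec_le (M : Matrix m n ℝ) (x : n → ℝ) (i : m) :
    |(M *ᵥ x) i| ≤ (M.map abs *ᵥ fun j => |x j|) i :=
  calc |∑ j, M i j * x j| ≤ ∑ j, |M i j * x j| := Finset.abs_sum_le_sum_abs _ _
    _ = (M.map abs *ᵥ fun j => |x j|) i := by simp [mulVec, dotProduct, abs_mul]

lemma sum_abs_single [DecidableEq n] (e : Fin k ≃ n) (x : n → ℝ) (j : n) :
    ∑ i, |(Pi.single (e i) (x (e i)) : n → ℝ) j| = |x j| := by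
  rw [e.sum_comp fun l => |(Pi.single l (x l) : n → ℝ) j|]
  simp [Pi.single_apply, apply_ite]

lemma sum_abs_mulVec_single [DecidableEq n] (e : Fin k ≃ n) (M : Matrix m n ℝ) (x : n → ℝ)
    (v : m) : ∑ i, |(M *ᵥ Pi.single (e i) (x (e i))) v| = (M.map abs *ᵥ fun j => |x j|) v := by
  rw [e.sum_comp fun l => |(M *ᵥ Pi.single l (x l)) v|]
  simp only [mulVec_single, Pi.smul_apply, col_apply, op_smul_eq_smul, smul_eq_mul, abs_mul]
  simp [mulVec, dotProduct, mul_comm]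

variable [Fintype m]

lemma sum_mulVec_eq_zero {B : Matrix m n ℝ} (hcol : ∀ j, ∑ i, B i j = 0) (x : n → ℝ) :
    ∑ i, (B *ᵥ x) i = 0 := by
  simp only [mulVec, dotProduct]
  rw [Finset.sum_comm]
  simp [← Finset.sum_mul, hcol]

def IsObliviousRouting (B : Matrix m n ℝ) (A : Matrix n m ℝ) : Prop :=
  ∀ χ : m → ℝ, ∑ v, χ v = 0 → B *ᵥ (A *ᵥ χ) = χ

lemma lpNormE_mulVec_le_map_abs (M : Matrix m n ℝ) (x : n → ℝ) :
    lpNormE p (M *ᵥ x) ≤ lpNormE p (M.map abs *ᵥ fun j => |x j|) :=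
  lpNormE_le_of_abs_le (abs_mulVec_le M x)

variable {B : Matrix m n ℝ} {A : Matrix n m ℝ} {χ : Fin k → m → ℝ}

lemma opt_nonneg (B : Matrix m n ℝ) (χ : Fin k → m → ℝ) : 0 ≤ opt p B χ :=
  Real.sInf_nonneg fun _ ⟨_, _, hc⟩ => hc ▸ lpNormE_nonneg _

lemma opt_le_cong {f : Fin k → n → ℝ} (hf : ∀ i, B *ᵥ f i = χ i) : opt p B χ ≤ cong p f :=
  csInf_le ⟨0, fun _ ⟨_, _, hc⟩ => hc ▸ lpNormE_nonneg _⟩ ⟨f, hf, rfl⟩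

lemma cong_mulVec_le (hp : 1 ≤ p) {f : Fin k → n → ℝ} (hf : ∀ i, B *ᵥ f i = χ i) :
    cong p (fun i => A *ᵥ χ i) ≤ opNormE p ((A * B).map abs) * cong p f := by
  have hpt : ∀ j, ∑ i, |(A *ᵥ χ i) j| ≤ ((A * B).map abs *ᵥ fun j => ∑ i, |f i j|) j := by
    intro j
    calc ∑ i, |(A *ᵥ χ i) j| = ∑ i, |((A * B) *ᵥ f i) j| := by simp_rw [← hf, mulVec_mulVec]
      _ ≤ ∑ i, ((A * B).map abs *ᵥ fun l => |f i l|) j :=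
        Finset.sum_le_sum fun i _ => abs_mulVec_le _ _ j
      _ = _ := by
        simp only [mulVec, dotProduct, Finset.mul_sum]
        exact Finset.sum_comm
  calc cong p (fun i => A *ᵥ χ i)
      ≤ lpNormE p ((A * B).map abs *ᵥ fun j => ∑ i, |f i j|) :=
        lpNormE_le_of_abs_le fun j => (abs_of_nonneg (by positivity)).trans_le (hpt j)
    _ ≤ _ := lpNormE_mulVec_le hp _ _

lemma cong_le_opNormE_mul_opt (hp : 1 ≤ p) (hA : IsObliviousRouting B A)
    (hχ : ∀ i, ∑ v, χ i v = 0) :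
    cong p (fun i => A *ᵥ χ i) ≤ opNormE p ((A * B).map abs) * opt p B χ := by
  have hfeas : ∀ i, B *ᵥ (A *ᵥ χ i) = χ i := fun i => hA _ (hχ i)
  rcases (opNormE_nonneg (p := p) ((A * B).map abs)).eq_or_lt with hN | hN
  · simpa [← hN] using cong_mulVec_le (A := A) hp hfeas
  rw [← div_le_iff₀' hN]
  refine le_csInf ⟨_, _, hfeas, rfl⟩ fun _ ⟨f, hf, hc⟩ => ?_
  rw [hc, div_le_iff₀' hN]
  exact cong_mulVec_le hp hf

lemma cong_div_opt_le_opNormE (hp : 1 ≤ p) (hA : IsObliviousRouting B A)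
    (hχ : ∀ i, ∑ v, χ i v = 0) :
    cong p (fun i => A *ᵥ χ i) / opt p B χ ≤ opNormE p ((A * B).map abs) :=
  div_le_of_le_mul₀ (opt_nonneg B χ) (opNormE_nonneg _) (cong_le_opNormE_mul_opt hp hA hχ)

lemma compRatio_nonneg (B : Matrix m n ℝ) (A : Matrix n m ℝ) : 0 ≤ compRatio p B A :=
  Real.sSup_nonneg fun _ ⟨_, χ, _, hr⟩ => hr ▸ div_nonneg (lpNormE_nonneg _) (opt_nonneg B χ)

lemma compRatio_le_opNormE (hp : 1 ≤ p) (hA : IsObliviousRouting B A) :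
    compRatio p B A ≤ opNormE p ((A * B).map abs) :=
  Real.sSup_le (fun _ ⟨_, _, hχ, hr⟩ => hr ▸ cong_div_opt_le_opNormE hp hA hχ)
    (opNormE_nonneg _)

lemma cong_le_compRatio_mul_opt (hp : 1 ≤ p) (hA : IsObliviousRouting B A)
    (hχ : ∀ i, ∑ v, χ i v = 0) :
    cong p (fun i => A *ᵥ χ i) ≤ compRatio p B A * opt p B χ := by
  rcases (opt_nonneg (p := p) B χ).eq_or_lt with h0 | hpos
  · simpa [← h0] using cong_le_opNormE_mul_opt hp hA hχ
  rw [← div_le_iff₀ hpos]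
  exact le_csSup ⟨_, fun _ ⟨_, _, hχ, hr⟩ => hr ▸ cong_div_opt_le_opNormE hp hA hχ⟩
    ⟨k, χ, hχ, rfl⟩

lemma opNormE_le_compRatio (hp : 1 ≤ p) (hA : IsObliviousRouting B A)
    (hcol : ∀ j, ∑ v, B v j = 0) : opNormE p ((A * B).map abs) ≤ compRatio p B A := by
  classical
  refine opNormE_le_of_forall (compRatio_nonneg B A) fun x => ?_
  -- one commodity per edge `j`, with demand `x j • B.col j`, routed along `j` itself
  let e := (Fintype.equivFin n).symm
  let f : Fin (Fintype.card n) → n → ℝ := fun i => Pi.single (e i) (x (e i))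
  have hχ : ∀ i, ∑ v, (B *ᵥ f i) v = 0 := fun i => sum_mulVec_eq_zero hcol (f i)
  have hf : cong p f = lpNormE p x := by
    simp only [cong, f, sum_abs_single, lpNormE_abs]
  have hAf : cong p (fun i => A *ᵥ (B *ᵥ f i)) = lpNormE p ((A * B).map abs *ᵥ fun j => |x j|) := by
    simp only [cong, f, mulVec_mulVec, sum_abs_mulVec_single]
  calc lpNormE p ((A * B).map abs *ᵥ x)
      ≤ lpNormE p (((A * B).map abs).map abs *ᵥ fun j => |x j|) := lpNormE_mulVec_le_map_abs _ _
    _ = cong p (fun i => A *ᵥ (B *ᵥ f i)) := by rw [hAf, Matrix.map_map, Function.comp_def]; simp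
    _ ≤ compRatio p B A * opt p B (fun i => B *ᵥ f i) := cong_le_compRatio_mul_opt hp hA hχ
    _ ≤ compRatio p B A * lpNormE p x :=
        mul_le_mul_of_nonneg_left (hf ▸ opt_le_cong fun i => rfl) (compRatio_nonneg B A)

lemma compRatio_eq_opNormE (hp : 1 ≤ p) (hA : IsObliviousRouting B A)
    (hcol : ∀ j, ∑ v, B v j = 0) : compRatio p B A = opNormE p ((A * B).map abs) :=
  le_antisymm (compRatio_le_opNormE hp hA) (opNormE_le_compRatio hp hA hcol)

end Routing

section MoorePenrose

variable {m : Type*} [Fintype m] {L X Y : Matrix m m ℝ}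

lemma IsMoorePenrose.transpose (h : IsMoorePenrose L X) : IsMoorePenrose Lᵀ Xᵀ := by
  obtain ⟨h1, h2, h3, h4⟩ := h
  refine ⟨?_, ?_, ?_, ?_⟩
  · simpa [transpose_mul, Matrix.mul_assoc] using congrArg Matrix.transpose h1
  · simpa [transpose_mul, Matrix.mul_assoc] using congrArg Matrix.transpose h2
  · rw [← transpose_mul, h4, h4]
  · rw [← transpose_mul, h3, h3]

lemma IsMoorePenrose.eq_mul_mul (hX : IsMoorePenrose L X) (hY : IsMoorePenrose L Y) :
    X = X * L * Y := by
  have hL : Lᵀ = Lᵀ * (L * Y)ᵀ := by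
    rw [← transpose_mul, hY.1]
  calc X = X * (L * X)ᵀ := by rw [hX.2.2.1, ← Matrix.mul_assoc, hX.2.1]
    _ = X * ((L * X)ᵀ * (L * Y)ᵀ) := by rw [transpose_mul, Matrix.mul_assoc, ← hL]
    _ = X * L * X * L * Y := by rw [hX.2.2.1, hY.2.2.1]; simp only [Matrix.mul_assoc]
    _ = X * L * Y := by rw [hX.2.1]

lemma IsMoorePenrose.unique (hX : IsMoorePenrose L X) (hY : IsMoorePenrose L Y) : X = Y := by
  have hYt : Yᵀ = (X * L * Y)ᵀ := by
    rw [hY.transpose.eq_mul_mul hX.transpose]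
    simp [transpose_mul, Matrix.mul_assoc]
  exact (hX.eq_mul_mul hY).trans (transpose_injective hYt).symm

lemma IsMoorePenrose.transpose_eq_self (h : IsMoorePenrose L X) (hL : Lᵀ = L) : Xᵀ = X :=
  (hL ▸ h.transpose).unique h

lemma IsMoorePenrose.mulVec_mulVec_eq_self (h : IsMoorePenrose L X) (hL : Lᵀ = L)
    (hconn : IsConnectedLap L) (hcol : ∀ j, ∑ i, L i j = 0) {χ : m → ℝ} (hχ : ∑ i, χ i = 0) :
    L *ᵥ (X *ᵥ χ) = χ := by
  have hLLX : L * (L * X) = L := by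
    calc L * (L * X) = (L * X * L)ᵀ := by rw [transpose_mul, h.2.2.1, hL]
      _ = L := by rw [h.1, hL]
  -- `χ - L X χ` lies in the kernel of `L`, so it is constant; its entries sum to zero
  obtain ⟨c, hc⟩ := hconn (χ - L *ᵥ (X *ᵥ χ)) (by
    rw [mulVec_sub, mulVec_mulVec, mulVec_mulVec, Matrix.mul_assoc, hLLX, sub_self])
  have hsum : ∑ i, (χ - L *ᵥ (X *ᵥ χ)) i = 0 := by
    simp only [Pi.sub_apply, Finset.sum_sub_distrib, hχ, sum_mulVec_eq_zero hcol, sub_zero]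
  ext i
  have : Nonempty m := ⟨i⟩
  have hc0 : c = 0 := by
    rw [Finset.sum_congr rfl fun i _ => hc i] at hsum
    simpa using hsum
  simpa [hc0, sub_eq_zero, eq_comm] using hc i

end MoorePenrose

lemma sum_incMatrix_apply_s10 {V E : Type*} [Fintype V] [DecidableEq V] (tail head : E → V)
    (hloop : ∀ e, tail e ≠ head e) (e : E) : ∑ v, incMatrix tail head v e = 0 := by
  simp [incMatrix, Finset.sum_ite, Finset.filter_eq', Finset.filter_ne', (hloop e).symm]

theorem compRatio_conjugate_eq_general (tail head : E → V) (hloop : ∀ e, tail e ≠ head e)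
    (B : Matrix V E ℝ) (hB : B = incMatrix tail head)
    (L : Matrix V V ℝ) (hL : L = B * Bᵀ)
    (hconn : IsConnectedLap L)
    (Lp : Matrix V V ℝ) (hLp : IsMoorePenrose L Lp)
    (p q : ℝ≥0∞) (hpq : 1 / p + 1 / q = 1) :
    compRatio p B (Bᵀ * Lp) = compRatio q B (Bᵀ * Lp) := by
  have : p.HolderConjugate q := holderConjugate_iff.2 (by simpa using hpq)
  have hcolB : ∀ e, ∑ v, B v e = 0 := hB ▸ sum_incMatrix_apply_s10 tail head hloop
  have hcolL : ∀ u, ∑ v, L v u = 0 := fun u => by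
    rw [hL]
    exact sum_mulVec_eq_zero hcolB fun e => Bᵀ e u
  have hLsymm : Lᵀ = L := by rw [hL, transpose_mul, transpose_transpose]
  have hroute : IsObliviousRouting B (Bᵀ * Lp) := fun χ hχ => by
    rw [mulVec_mulVec, ← Matrix.mul_assoc, ← hL, ← mulVec_mulVec]
    exact hLp.mulVec_mulVec_eq_self hLsymm hconn hcolL hχ
  have hsymm : (Bᵀ * Lp * B)ᵀ = Bᵀ * Lp * B := by
    rw [transpose_mul, transpose_mul, transpose_transpose, hLp.transpose_eq_self hLsymm,
      Matrix.mul_assoc]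
  rw [compRatio_eq_opNormE (HolderConjugate.one_le p q) hroute hcolB,
    compRatio_eq_opNormE (HolderConjugate.one_le q p) hroute hcolB,
    opNormE_transpose (p := p) (q := q), ← transpose_map, hsymm]

/-- For conjugate exponents `p, q ∈ [1,∞]`, the ℓp and ℓq multi-commodity
competitive ratios of the electrical routing `A_ℰ = Bᵀ L⁺` coincide. -/
theorem compRatio_conjugate_eq (tail head : E → V) (hloop : ∀ e, tail e ≠ head e)
    (B : Matrix V E ℝ) (hB : B = incMatrix tail head)
    (L : Matrix V V ℝ) (hL : L = B * Bᵀ)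
    (hconn : IsConnectedLap L)
    (Lp : Matrix V V ℝ) (hLp : IsMoorePenrose L Lp)
    (p q : ℝ≥0∞) (hp : 1 ≤ p) (hq : 1 ≤ q) (hpq : 1 / p + 1 / q = 1) :
    compRatio p B (Bᵀ * Lp) = compRatio q B (Bᵀ * Lp) :=
  compRatio_conjugate_eq_general tail head hloop B hB L hL hconn Lp hLp p q hpq
end
end
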